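/- Let A be a nonnegative m×m real irreducible matrix whose column sums are all at most 1 and such that at least one column sum is strictly less than 1. Then the matrix I − A is invertible, and the partial sums ∑_{i=0}^{k−1} A^i converge entrywise to (I − A)^{−1} as k → ∞. -/

import Mathlib

open Matrix Finset Filter Topology

/-- A nonnegative square matrix is irreducible: every entry of some power is positive. -/
def MatrixIrreducible {m : Type*} [Fintype m] [DecidableEq m] (A : Matrix m m ℝ) : Prop :=
  ∀ i j, ∃ k : ℕ, 1 ≤ k ∧ 0 < (A ^ k) i j

/-!
For `A ≥ 0` with column sums `1 ᵥ* A ≤ 1`, the column sums of `A ^ k` are antitone in `k`.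
Irreducibility spreads the deficit of column `j₀` to every column: if `(A ^ k) j₀ j > 0`, column
`j` of `A ^ (k + 1)` sums to less than `1`. So some power `A ^ N` has all column sums at most
`ρ < 1`, those of `A ^ k` are then at most `ρ ^ (k / N)`, and `A ^ k → 0`. Finally
`(∑ i ∈ range k, A ^ i) * (1 - A) = 1 - A ^ k` with `det (1 - A ^ k) → 1` makes `1 - A`
invertible and identifies the limit of the partial sums.
-/

theorem Finite.exists_lt_forall_le {ι β : Type*} [Finite ι] [LinearOrder β] [NoMinOrder β]
    {f : ι → β} {a : β} (h : ∀ i, f i < a) : ∃ b < a, ∀ i, f i ≤ b := by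
  cases isEmpty_or_nonempty ι
  · obtain ⟨b, hb⟩ := exists_lt a
    exact ⟨b, hb, isEmptyElim⟩
  · obtain ⟨i₀, hi₀⟩ := Finite.exists_max f
    exact ⟨f i₀, h i₀, hi₀⟩

namespace Matrix

theorem one_vecMul_apply {m n R : Type*} [Fintype m] [NonAssocSemiring R] (M : Matrix m n R)
    (j : n) : (1 ᵥ* M) j = ∑ i, M i j := by
  simp [vecMul, dotProduct]

section Nonneg

variable {n R : Type*} [Fintype n] [CommSemiring R] [PartialOrder R]
  {A M : Matrix n n R}

theorem vecMul_le_vecMul_of_nonneg [IsOrderedRing R] (hM : ∀ i j, 0 ≤ M i j) {v w : n → R}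
    (h : v ≤ w) : v ᵥ* M ≤ w ᵥ* M :=
  fun j => sum_le_sum fun i _ => mul_le_mul_of_nonneg_right (h i) (hM i j)

theorem vecMul_apply_lt_vecMul_apply [IsStrictOrderedRing R] (hM : ∀ i j, 0 ≤ M i j)
    {v w : n → R} (h : v ≤ w) {i j : n} (hi : v i < w i) (hij : 0 < M i j) :
    (v ᵥ* M) j < (w ᵥ* M) j :=
  sum_lt_sum (fun l _ => mul_le_mul_of_nonneg_right (h l) (hM l j))
    ⟨i, mem_univ i, mul_lt_mul_of_pos_right hi hij⟩

theorem apply_le_one_vecMul_apply [IsOrderedRing R] (hM : ∀ i j, 0 ≤ M i j) (i j : n) :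
    M i j ≤ (1 ᵥ* M) j := by
  rw [one_vecMul_apply]
  exact single_le_sum (fun l _ => hM l j) (mem_univ i)

variable [DecidableEq n]

theorem antitone_one_vecMul_pow [IsOrderedRing R] (hA : ∀ i j, 0 ≤ A i j) (hcol : 1 ᵥ* A ≤ 1) :
    Antitone fun k => 1 ᵥ* A ^ k :=
  antitone_nat_of_succ_le fun k => by
    simpa only [pow_succ', ← vecMul_vecMul] using
      vecMul_le_vecMul_of_nonneg (pow_apply_nonneg hA k) hcol

theorem one_vecMul_pow_le_one [IsOrderedRing R] (hA : ∀ i j, 0 ≤ A i j) (hcol : 1 ᵥ* A ≤ 1)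
    (k : ℕ) : 1 ᵥ* A ^ k ≤ 1 := by
  simpa using antitone_one_vecMul_pow hA hcol k.zero_le

theorem one_vecMul_pow_succ_apply_lt_one [IsStrictOrderedRing R] (hA : ∀ i j, 0 ≤ A i j)
    (hcol : 1 ᵥ* A ≤ 1) {i j : n} (hi : (1 ᵥ* A) i < 1) {k : ℕ} (hij : 0 < (A ^ k) i j) :
    (1 ᵥ* A ^ (k + 1)) j < 1 :=
  calc (1 ᵥ* A ^ (k + 1)) j = (1 ᵥ* A ᵥ* A ^ k) j := by rw [pow_succ', vecMul_vecMul]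
    _ < (1 ᵥ* A ^ k) j := vecMul_apply_lt_vecMul_apply (pow_apply_nonneg hA k) hcol hi hij
    _ ≤ 1 := one_vecMul_pow_le_one hA hcol k j

theorem one_vecMul_pow_apply_le_pow_div [IsOrderedRing R] (hA : ∀ i j, 0 ≤ A i j)
    (hcol : 1 ᵥ* A ≤ 1) {N : ℕ} {ρ : R} (hρ : 0 ≤ ρ) (hN : ∀ j, (1 ᵥ* A ^ N) j ≤ ρ) (k : ℕ)
    (j : n) : (1 ᵥ* A ^ k) j ≤ ρ ^ (k / N) := by
  suffices h : ∀ q j, (1 ᵥ* A ^ (N * q)) j ≤ ρ ^ q from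
    (antitone_one_vecMul_pow hA hcol (Nat.mul_div_le k N) j).trans (h _ j)
  intro q
  induction q with
  | zero => simp
  | succ q ih =>
    intro j
    calc (1 ᵥ* A ^ (N * (q + 1))) j = (1 ᵥ* A ^ (N * q) ᵥ* A ^ N) j := by
          rw [vecMul_vecMul, ← pow_add, mul_add_one]
      _ ≤ ((ρ ^ q • 1) ᵥ* A ^ N) j := vecMul_le_vecMul_of_nonneg (pow_apply_nonneg hA N)
          (fun l => by simpa using ih l) j
      _ ≤ ρ ^ (q + 1) := by
          rw [smul_vecMul, Pi.smul_apply, smul_eq_mul, pow_succ]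
          exact mul_le_mul_of_nonneg_left (hN j) (pow_nonneg hρ q)

end Nonneg

section Real

variable {n : Type*} [Fintype n] [DecidableEq n] {A : Matrix n n ℝ}

theorem tendsto_pow_atTop_nhds_zero_of_one_vecMul_pow_lt_one (hA : ∀ i j, 0 ≤ A i j)
    (hcol : 1 ᵥ* A ≤ 1) {N : ℕ} (hN0 : N ≠ 0) (hN : ∀ j, (1 ᵥ* A ^ N) j < 1) :
    Tendsto (A ^ ·) atTop (𝓝 0) := by
  obtain ⟨ρ, hρ1, hρ⟩ := Finite.exists_lt_forall_le hN
  have hdecay : Tendsto (fun k => max ρ 0 ^ (k / N)) atTop (𝓝 0) :=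
    (tendsto_pow_atTop_nhds_zero_of_lt_one (le_max_right _ _) (max_lt hρ1 one_pos)).comp
      (Nat.tendsto_div_const_atTop hN0)
  refine tendsto_pi_nhds.mpr fun i => tendsto_pi_nhds.mpr fun j => ?_
  refine squeeze_zero (fun k => pow_apply_nonneg hA k i j) (fun k => ?_) hdecay
  exact (apply_le_one_vecMul_apply (pow_apply_nonneg hA k) i j).trans <|
    one_vecMul_pow_apply_le_pow_div hA hcol (le_max_right _ _)
      (fun l => (hρ l).trans (le_max_left _ _)) k j

theorem exists_one_vecMul_pow_lt_one_of_irreducible (hA : ∀ i j, 0 ≤ A i j)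
    (hirr : MatrixIrreducible A) (hcol : 1 ᵥ* A ≤ 1) {j₀ : n} (hj₀ : (1 ᵥ* A) j₀ < 1) :
    ∃ N ≠ 0, ∀ j, (1 ᵥ* A ^ N) j < 1 := by
  choose k _ hk using hirr j₀
  refine ⟨univ.sup k + 1, Nat.succ_ne_zero _, fun j => ?_⟩
  exact (antitone_one_vecMul_pow hA hcol (Nat.succ_le_succ (le_sup (mem_univ j))) j).trans_lt
    (one_vecMul_pow_succ_apply_lt_one hA hcol hj₀ (hk j))

theorem tendsto_pow_atTop_nhds_zero_of_irreducible (hA : ∀ i j, 0 ≤ A i j)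
    (hirr : MatrixIrreducible A) (hcol : 1 ᵥ* A ≤ 1) {j₀ : n} (hj₀ : (1 ᵥ* A) j₀ < 1) :
    Tendsto (A ^ ·) atTop (𝓝 0) :=
  have ⟨_, hN0, hN⟩ := exists_one_vecMul_pow_lt_one_of_irreducible hA hirr hcol hj₀
  tendsto_pow_atTop_nhds_zero_of_one_vecMul_pow_lt_one hA hcol hN0 hN

end Real

section NeumannSeries

variable {n K : Type*} [Fintype n] [DecidableEq n] [Field K] [TopologicalSpace K]
  [IsTopologicalRing K] {A : Matrix n n K}

theorem isUnit_one_sub_of_tendsto_pow [T1Space K] (h : Tendsto (A ^ ·) atTop (𝓝 0)) :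
    IsUnit (1 - A) := by
  have hdet : Tendsto (fun k => (1 - A ^ k).det) atTop (𝓝 1) := by
    have hsub : Tendsto (fun k => 1 - A ^ k) atTop (𝓝 1) := by
      simpa using (tendsto_const_nhds (x := 1)).sub h
    exact (continuous_id.matrix_det.tendsto' 1 1 det_one).comp hsub
  obtain ⟨k, hk⟩ := (hdet.eventually_ne one_ne_zero).exists
  rw [isUnit_iff_isUnit_det, isUnit_iff_ne_zero]
  intro h0
  apply hk
  rw [← geom_sum_mul_neg, det_mul, h0, mul_zero]

theorem tendsto_geom_sum_of_tendsto_pow [T1Space K] (h : Tendsto (A ^ ·) atTop (𝓝 0)) :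
    Tendsto (fun k => ∑ i ∈ range k, A ^ i) atTop (𝓝 (1 - A)⁻¹) := by
  have hdet : IsUnit (1 - A).det := (isUnit_iff_isUnit_det _).mp (isUnit_one_sub_of_tendsto_pow h)
  have hsum (k : ℕ) : ∑ i ∈ range k, A ^ i = (1 - A ^ k) * (1 - A)⁻¹ := by
    rw [← geom_sum_mul_neg, mul_assoc, mul_nonsing_inv _ hdet, mul_one]
  simp only [hsum]
  simpa using ((tendsto_const_nhds (x := 1)).sub h).mul_const (1 - A)⁻¹

end NeumannSeries

end Matrix

/-- For a nonnegative irreducible matrix with column sums at most 1 and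
at least one strictly deficient column, `I - A` is invertible and the partial sums
`∑_{i<k} A^i` converge entrywise to `(I - A)⁻¹`. -/
theorem substochastic_irreducible_neumann_series (m : ℕ)
    (A : Matrix (Fin m) (Fin m) ℝ)
    (hA : ∀ i j, 0 ≤ A i j)
    (hirr : MatrixIrreducible A)
    (hcol : ∀ j, ∑ i, A i j ≤ 1)
    (hdef : ∃ j₀, ∑ i, A i j₀ < 1) :
    IsUnit (1 - A) ∧
      Filter.Tendsto (fun k : ℕ => ∑ i ∈ Finset.range k, A ^ i)
        Filter.atTop (nhds (1 - A)⁻¹) := by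
  obtain ⟨j₀, hj₀⟩ := hdef
  have hpow := tendsto_pow_atTop_nhds_zero_of_irreducible hA hirr
    (fun j => (one_vecMul_apply A j).trans_le (hcol j)) ((one_vecMul_apply A j₀).trans_lt hj₀)
  exact ⟨isUnit_one_sub_of_tendsto_pow hpow, tendsto_geom_sum_of_tendsto_pow hpow⟩
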